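/- Nontermination Is Sequential (standard semantics): for a program P, there exists a value v with P ⇓ v if and only if there is no infinite call chain P = e₀ → e₁ → e₂ → … . -/

import Mathlib

/- Untyped λ-expressions. -/
inductive Exp : Type
  | var : String → Exp
  | app : Exp → Exp → Exp
  | lam : String → Exp → Exp
deriving DecidableEq

namespace Exp

/-- Free variables. -/
def fv : Exp → Finset String
  | var x => {x}
  | app e1 e2 => fv e1 ∪ fv e2
  | lam x e => fv e \ {x}

/-- Substitution e[v/x].  (For closed `v`, as in CBV evaluation of programs,
this is capture-avoiding.) -/
def subst (v : Exp) (x : String) : Exp → Exp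
  | var y => if y = x then v else var y
  | app e1 e2 => app (subst v x e1) (subst v x e2)
  | lam y e => if y = x then lam y e else lam y (subst v x e)

/-- A (standard) value is an abstraction. -/
def IsValue : Exp → Prop
  | lam _ _ => True
  | _ => False

end Exp

/-- Call-by-value evaluation `e ⇓ v` (standard, substitution-based semantics). -/
inductive EvalS : Exp → Exp → Prop
  | value (x : String) (e : Exp) : EvalS (Exp.lam x e) (Exp.lam x e)
  | apply {e1 e2 : Exp} {x : String} {e0 v2 v : Exp} :
      EvalS e1 (Exp.lam x e0) → EvalS e2 v2 → EvalS (Exp.subst v2 x e0) v →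
      EvalS (Exp.app e1 e2) v

/-- The "calls" relation `e → e'` on closed λ-expressions. -/
inductive CallS : Exp → Exp → Prop
  | oper (e1 e2 : Exp) : CallS (Exp.app e1 e2) e1
  | opnd {e1 v1 : Exp} (e2 : Exp) : EvalS e1 v1 → CallS (Exp.app e1 e2) e2
  | call {e1 e2 : Exp} {x : String} {e0 v2 : Exp} :
      EvalS e1 (Exp.lam x e0) → EvalS e2 v2 →
      CallS (Exp.app e1 e2) (Exp.subst v2 x e0)

/-!
Both sides say that `P` is accessible for the converse of the call relation: an infinite call
chain is exactly a witness of non-accessibility. If `P ⇓ v`, the calls out of an application go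
to the three expressions whose evaluations are the premises of its derivation (for the `call` step
by determinism of `⇓`), so accessibility follows by induction on the derivation. Conversely,
well-founded induction along calls builds a derivation for every accessible closed expression,
since evaluation and substitution of closed values keep expressions closed.
-/

namespace Exp

theorem fv_subst_subset (v : Exp) (x : String) (e : Exp) :
    (subst v x e).fv ⊆ e.fv \ {x} ∪ v.fv := by
  induction e with
  | var y =>
    by_cases h : y = x <;> simp [subst, fv, h]
  | app e1 e2 ih1 ih2 =>
    simp only [subst, fv]
    grind
  | lam y e ih =>
    by_cases h : y = x
    · simp [subst, fv, h]
    · simp only [subst, h, ↓reduceIte, fv]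
      grind

theorem fv_subst_eq_empty {v : Exp} {x : String} {e : Exp} (he : (lam x e).fv = ∅)
    (hv : v.fv = ∅) : (subst v x e).fv = ∅ :=
  Finset.subset_empty.mp <| (fv_subst_subset v x e).trans <| by
    rw [hv, Finset.union_empty]
    exact he.subset

end Exp

namespace EvalS

theorem det {e v v' : Exp} (h : EvalS e v) (h' : EvalS e v') : v = v' := by
  induction h generalizing v' with
  | value => cases h'; rfl
  | apply _ _ _ ih1 ih2 ih3 =>
    cases h' with
    | apply h1' h2' h3' =>
      cases ih1 h1'
      cases ih2 h2'
      exact ih3 h3'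

theorem fv_eq_empty {e v : Exp} (h : EvalS e v) (he : e.fv = ∅) : v.fv = ∅ := by
  induction h with
  | value => exact he
  | apply _ _ _ ih1 ih2 ih3 =>
    simp only [Exp.fv, Finset.union_eq_empty] at he
    exact ih3 (Exp.fv_subst_eq_empty (ih1 he.1) (ih2 he.2))

theorem acc_flip_callS {e v : Exp} (h : EvalS e v) : Acc (flip CallS) e := by
  induction h with
  | value => exact ⟨_, fun _ h ↦ nomatch h⟩
  | apply h1 h2 _ ih1 ih2 ih3 =>
    refine ⟨_, fun e' hcall ↦ ?_⟩
    cases hcall with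
    | oper => exact ih1
    | opnd => exact ih2
    | call h1' h2' =>
      cases h1.det h1'
      cases h2.det h2'
      exact ih3

end EvalS

theorem exists_evalS_lam_of_acc {e : Exp} (h : Acc (flip CallS) e) (he : e.fv = ∅) :
    ∃ x e₀, EvalS e (.lam x e₀) := by
  induction h with
  | intro e _ ih =>
    cases e with
    | var y => simp [Exp.fv] at he
    | lam y b => exact ⟨y, b, .value y b⟩
    | app e1 e2 =>
      simp only [Exp.fv, Finset.union_eq_empty] at he
      obtain ⟨x, e₀, hv1⟩ := ih e1 (.oper e1 e2) he.1
      obtain ⟨_, _, hv2⟩ := ih e2 (.opnd e2 hv1) he.2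
      obtain ⟨_, _, hv⟩ := ih _ (.call hv1 hv2)
        (Exp.fv_subst_eq_empty (hv1.fv_eq_empty he.1) (hv2.fv_eq_empty he.2))
      exact ⟨_, _, .apply hv1 hv2 hv⟩

/-- NIS (Nontermination Is Sequential), standard semantics: a program `P`
evaluates to some value iff there is no infinite call chain starting at `P`. -/
theorem nontermination_is_sequential_standard (P : Exp) (hP : P.fv = ∅) :
    (∃ v, Exp.IsValue v ∧ EvalS P v) ↔
      ¬ ∃ f : ℕ → Exp, f 0 = P ∧ ∀ n, CallS (f n) (f (n + 1)) := by
  have no_chain_iff_acc : (¬ ∃ f : ℕ → Exp, f 0 = P ∧ ∀ n, CallS (f n) (f (n + 1))) ↔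
      Acc (flip CallS) P :=
    (not_congr (not_acc_iff_exists_descending_chain (r := flip CallS)).symm).trans not_not
  rw [no_chain_iff_acc]
  constructor
  · rintro ⟨v, -, hv⟩
    exact hv.acc_flip_callS
  · intro hacc
    obtain ⟨x, e₀, hv⟩ := exists_evalS_lam_of_acc hacc hP
    exact ⟨.lam x e₀, trivial, hv⟩
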